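/- Let f : ℝ^N → ℝ have a k*-sparse global minimizer θ* and let β > α > 0. Suppose f is (2k+k*, β)-smooth and (k+k*, α)-strongly convex along sparse directions, with k ≥ 81(β/α)²·k*. Then the deterministic IHT iteration θ' = T_k(θ − (1/(2β))∇f(θ)), applied to a k-sparse iterate θ, satisfies ‖θ' − θ*‖² ≤ (1 − (1/36)·(α/β))·‖θ − θ*‖². -/

import Mathlib

open scoped BigOperators RealInnerProductSpace

noncomputable section

/-- The set of nonzero coordinates of a vector. -/
def supp {N : ℕ} (x : EuclideanSpace ℝ (Fin N)) : Finset (Fin N) :=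
  Finset.univ.filter (fun i => x i ≠ 0)

/-- Restriction of a vector to a coordinate set `S` (zero outside `S`). -/
def restrict {N : ℕ} (x : EuclideanSpace ℝ (Fin N)) (S : Finset (Fin N)) :
    EuclideanSpace ℝ (Fin N) :=
  WithLp.toLp 2 (fun i => if i ∈ S then x i else 0)

/-- `y` is a result of the top-`k` hard-thresholding operator applied to `x`:
there is a set `S` of `k` coordinates of largest absolute value such that
`y` agrees with `x` on `S` and vanishes outside `S`. -/
def IsTopK {N : ℕ} (k : ℕ) (x y : EuclideanSpace ℝ (Fin N)) : Prop :=
  ∃ S : Finset (Fin N), S.card = k ∧ y = restrict x S ∧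
    ∀ i ∈ S, ∀ j ∉ S, |x j| ≤ |x i|

/-- The max-norm (ℓ∞ norm) of a vector. -/
def supNorm {N : ℕ} (x : EuclideanSpace ℝ (Fin N)) : ℝ :=
  ‖(WithLp.equiv 2 (Fin N → ℝ)) x‖

lemma mem_supp' {N : ℕ} {x : EuclideanSpace ℝ (Fin N)} {i : Fin N} :
    i ∈ supp x ↔ x i ≠ 0 := by simp [supp]

lemma notmem_supp' {N : ℕ} {x : EuclideanSpace ℝ (Fin N)} {i : Fin N}
    (h : i ∉ supp x) : x i = 0 := by
  by_contra hc; exact h (mem_supp'.mpr hc)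

lemma sum_eq_of_subset' {N : ℕ} {A : Finset (Fin N)} (F : Fin N → ℝ)
    (h : ∀ i ∉ A, F i = 0) : ∑ i, F i = ∑ i ∈ A, F i :=
  (Finset.sum_subset (Finset.subset_univ A) (fun i _ hi => h i hi)).symm

lemma inner_sum'' {N : ℕ} (x y : EuclideanSpace ℝ (Fin N)) :
    ⟪x, y⟫ = ∑ i, x i * y i := by
  simp [PiLp.inner_apply, RCLike.inner_apply, conj_trivial]
  exact Finset.sum_congr rfl (fun i _ => mul_comm _ _)

lemma normsq_sum' {N : ℕ} (x : EuclideanSpace ℝ (Fin N)) : ‖x‖^2 = ∑ i, (x i)^2 := by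
  rw [EuclideanSpace.norm_eq, Real.sq_sqrt (by positivity)]; simp [sq_abs]

lemma supp_sub' {N : ℕ} (x y : EuclideanSpace ℝ (Fin N)) :
    supp (x - y) ⊆ supp x ∪ supp y := by
  intro i hi
  rw [mem_supp'] at hi
  rw [Finset.mem_union, mem_supp', mem_supp']
  by_contra hc
  push_neg at hc
  apply hi
  show x i - y i = 0
  rw [hc.1, hc.2, sub_zero]

lemma supp_smulneg' {N : ℕ} (c : ℝ) (x : EuclideanSpace ℝ (Fin N)) (A : Finset (Fin N)) :
    supp (-(c • restrict x A)) ⊆ A := by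
  intro i hi
  rw [mem_supp'] at hi
  by_contra hc
  apply hi
  show -(c * (restrict x A) i) = 0
  simp [restrict, hc]

set_option maxHeartbeats 1000000 in
/-- One deterministic IHT step contracts the squared distance to a sparse minimizer
under restricted smoothness and restricted strong convexity. -/
theorem stmt_10 {N k kstar : ℕ} (α β : ℝ) (hα : 0 < α) (hαβ : α < β)
    (f : EuclideanSpace ℝ (Fin N) → ℝ) (hf : Differentiable ℝ f)
    (θstar : EuclideanSpace ℝ (Fin N)) (hstar : (supp θstar).card ≤ kstar)
    (hmin : ∀ x, f θstar ≤ f x)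
    (hsmooth : ∀ θ δ : EuclideanSpace ℝ (Fin N), (supp δ).card ≤ 2 * k + kstar →
      f (θ + δ) ≤ f θ + ⟪gradient f θ, δ⟫ + β / 2 * ‖δ‖ ^ 2)
    (hsc : ∀ θ δ : EuclideanSpace ℝ (Fin N), (supp δ).card ≤ k + kstar →
      f (θ + δ) ≥ f θ + ⟪gradient f θ, δ⟫ + α / 2 * ‖δ‖ ^ 2)
    (hk : 81 * (β / α) ^ 2 * (kstar : ℝ) ≤ (k : ℝ))
    (θ θ' : EuclideanSpace ℝ (Fin N)) (hθ : (supp θ).card ≤ k)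
    (hT : IsTopK k (θ - (1 / (2 * β)) • gradient f θ) θ') :
    ‖θ' - θstar‖ ^ 2 ≤ (1 - 1 / 36 * (α / β)) * ‖θ - θstar‖ ^ 2 := by
  have hβ : 0 < β := lt_trans hα hαβ
  set g : EuclideanSpace ℝ (Fin N) := gradient f θ with hgdef
  set b : EuclideanSpace ℝ (Fin N) := θ - (1 / (2 * β)) • g with hbdef
  obtain ⟨S, hScard, hθ'eq, htop⟩ := hT
  set U : Finset (Fin N) := (supp θ ∪ supp θstar) ∪ S with hUdef
  have hθU : supp θ ⊆ U := Finset.subset_union_left.trans Finset.subset_union_left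
  have hθstarU : supp θstar ⊆ U :=
    Finset.subset_union_right.trans Finset.subset_union_left
  have hSU : S ⊆ U := Finset.subset_union_right
  have hUcard : U.card ≤ 2 * k + kstar := by
    have h1 := Finset.card_union_le (supp θ ∪ supp θstar) S
    rw [← hUdef] at h1
    have h2 := Finset.card_union_le (supp θ) (supp θstar)
    omega
  have hbapp : ∀ i, b i = θ i - 1 / (2 * β) * g i := by
    intro i
    rw [hbdef]
    simp [PiLp.sub_apply, PiLp.smul_apply, smul_eq_mul]
  clear_value g b
  -- quantities
  set D2 : ℝ := ‖θ - θstar‖ ^ 2 with hD2def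
  set G : ℝ := ⟪g, θ - θstar⟫ with hGdef
  set M2 : ℝ := ∑ i ∈ U, (g i) ^ 2 with hM2def
  set r2 : ℝ := ∑ i ∈ U, (b i - θstar i) ^ 2 with hr2def
  clear_value D2 G M2 r2
  have hD20 : 0 ≤ D2 := by rw [hD2def]; positivity
  have hr20 : 0 ≤ r2 := by rw [hr2def]; exact Finset.sum_nonneg fun i _ => sq_nonneg _
  have hM20 : 0 ≤ M2 := by rw [hM2def]; exact Finset.sum_nonneg fun i _ => sq_nonneg _
  -- (A) strong convexity at θ towards θstar
  have hA : f θstar ≥ f θ - G + α / 2 * D2 := by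
    have hcard : (supp (θstar - θ)).card ≤ k + kstar := by
      have h1 := Finset.card_le_card (supp_sub' θstar θ)
      have h2 := Finset.card_union_le (supp θstar) (supp θ)
      omega
    have h := hsc θ (θstar - θ) hcard
    rw [← hgdef] at h
    have he : θ + (θstar - θ) = θstar := by abel
    rw [he] at h
    have hi1 : ⟪g, θstar - θ⟫ = -G := by
      rw [hGdef, show θstar - θ = -(θ - θstar) by abel, inner_neg_right]
    have hi2 : ‖θstar - θ‖ = ‖θ - θstar‖ := norm_sub_rev _ _
    rw [hi1, hi2] at h
    rw [hD2def]
    linarith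
  have hGa : α / 2 * D2 ≤ G := by have := hmin θ; linarith
  -- (B) smoothness with the restricted negative gradient step
  have hB : 3 * M2 ≤ 8 * β * G - 4 * α * β * D2 := by
    set δ2 : EuclideanSpace ℝ (Fin N) := -((1 / (2 * β)) • restrict g U) with hδ2def
    have hcard : (supp δ2).card ≤ 2 * k + kstar :=
      le_trans (Finset.card_le_card (supp_smulneg' _ _ _)) hUcard
    have hsm := hsmooth θ δ2 hcard
    rw [← hgdef] at hsm
    have hδ2app : ∀ i, δ2 i = -(1 / (2 * β) * (if i ∈ U then g i else 0)) := by
      intro i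
      rw [hδ2def]
      simp [PiLp.neg_apply, PiLp.smul_apply, smul_eq_mul, restrict]
    clear_value δ2
    have hinn : ⟪g, δ2⟫ = -(1 / (2 * β) * M2) := by
      rw [inner_sum'']
      rw [sum_eq_of_subset' (A := U) _ (fun i hi => by rw [hδ2app i, if_neg hi]; ring)]
      calc ∑ i ∈ U, g i * δ2 i
          = ∑ i ∈ U, (-(1 / (2 * β)) * (g i) ^ 2) :=
            Finset.sum_congr rfl (fun i hi => by rw [hδ2app i, if_pos hi]; ring)
        _ = -(1 / (2 * β) * M2) := by rw [← Finset.mul_sum, hM2def]; ring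
    have hnrm : ‖δ2‖ ^ 2 = (1 / (2 * β)) ^ 2 * M2 := by
      rw [normsq_sum']
      rw [sum_eq_of_subset' (A := U) _ (fun i hi => by rw [hδ2app i, if_neg hi]; ring)]
      calc ∑ i ∈ U, (δ2 i) ^ 2
          = ∑ i ∈ U, ((1 / (2 * β)) ^ 2 * (g i) ^ 2) :=
            Finset.sum_congr rfl (fun i hi => by rw [hδ2app i, if_pos hi]; ring)
        _ = (1 / (2 * β)) ^ 2 * M2 := by rw [← Finset.mul_sum, hM2def]
    rw [hinn, hnrm] at hsm
    have hlow := hmin (θ + δ2)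
    -- f θ - G + α/2 * D2 ≤ f θstar ≤ f (θ + δ2) ≤ f θ - (3/(8β)) M2
    have key : 3 * M2 / (8 * β) ≤ G - α / 2 * D2 := by
      have h38 : f θ + -(1 / (2 * β) * M2) + β / 2 * ((1 / (2 * β)) ^ 2 * M2)
          = f θ - 3 * M2 / (8 * β) := by field_simp; ring
      rw [h38] at hsm
      linarith
    rw [div_le_iff₀ (by positivity : (0:ℝ) < 8 * β)] at key
    nlinarith [key]
  -- (C) expansion of r2
  have hD2U : ∑ i ∈ U, (θ i - θstar i) ^ 2 = D2 := by
    rw [hD2def, normsq_sum']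
    rw [sum_eq_of_subset' (A := U) (fun i => ((θ - θstar) i) ^ 2)
      (fun i hi => by
        have h1 : θ i = 0 := notmem_supp' (fun hm => hi (hθU hm))
        have h2 : θstar i = 0 := notmem_supp' (fun hm => hi (hθstarU hm))
        show (θ i - θstar i) ^ 2 = 0
        rw [h1, h2]; ring)]
    rfl
  have hGU : ∑ i ∈ U, g i * (θ i - θstar i) = G := by
    rw [hGdef, inner_sum'']
    rw [sum_eq_of_subset' (A := U) (fun i => g i * (θ - θstar) i)
      (fun i hi => by
        have h1 : θ i = 0 := notmem_supp' (fun hm => hi (hθU hm))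
        have h2 : θstar i = 0 := notmem_supp' (fun hm => hi (hθstarU hm))
        show g i * (θ i - θstar i) = 0
        rw [h1, h2]; ring)]
    rfl
  have hC : 4 * β ^ 2 * r2 = 4 * β ^ 2 * D2 - 4 * β * G + M2 := by
    have hr2exp : r2 = (∑ i ∈ U, (θ i - θstar i) ^ 2)
        - 2 * (1 / (2 * β)) * (∑ i ∈ U, g i * (θ i - θstar i))
        + (1 / (2 * β)) ^ 2 * M2 := by
      rw [hr2def, hM2def, Finset.mul_sum, Finset.mul_sum, ← Finset.sum_sub_distrib,
        ← Finset.sum_add_distrib]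
      apply Finset.sum_congr rfl
      intro i _
      rw [hbapp i]
      ring
    rw [hr2exp, hD2U, hGU]
    field_simp
    ring
  -- contraction of the gradient step restricted to U
  have h1 : 2 * β * r2 ≤ (2 * β - α) * D2 := by
    have h12 : (6 * β) * (2 * β * r2) ≤ (6 * β) * ((2 * β - α) * D2) := by
      linarith [hC, hB, mul_le_mul_of_nonneg_left hGa hβ.le]
    exact le_of_mul_le_mul_left h12 (by positivity)
  -- thresholding side
  set Dm : Finset (Fin N) := supp θstar \ S with hDmdef
  set X : ℝ := ∑ i ∈ S, (b i - θstar i) ^ 2 with hXdef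
  set Z : ℝ := ∑ i ∈ Dm, (b i - θstar i) ^ 2 with hZdef
  set W : ℝ := ∑ i ∈ Dm, (b i) ^ 2 with hWdef
  set Y : ℝ := ∑ i ∈ Dm, (θstar i) ^ 2 with hYdef
  clear_value X Z W Y
  have hX0 : 0 ≤ X := by rw [hXdef]; exact Finset.sum_nonneg fun i _ => sq_nonneg _
  have hZ0 : 0 ≤ Z := by rw [hZdef]; exact Finset.sum_nonneg fun i _ => sq_nonneg _
  have hW0 : 0 ≤ W := by rw [hWdef]; exact Finset.sum_nonneg fun i _ => sq_nonneg _
  have hθ'app : ∀ i, θ' i = if i ∈ S then b i else 0 := by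
    intro i
    rw [hθ'eq]
    rfl
  have hXY : ‖θ' - θstar‖ ^ 2 = X + Y := by
    rw [normsq_sum']
    rw [← Finset.sum_add_sum_compl S (fun i => ((θ' - θstar) i) ^ 2)]
    have e1 : ∑ i ∈ S, ((θ' - θstar) i) ^ 2 = X := by
      rw [hXdef]
      apply Finset.sum_congr rfl
      intro i hi
      show (θ' i - θstar i) ^ 2 = _
      rw [hθ'app i, if_pos hi]
    have e2 : ∑ i ∈ Sᶜ, ((θ' - θstar) i) ^ 2 = Y := by
      have e3 : ∑ i ∈ Sᶜ, ((θ' - θstar) i) ^ 2 = ∑ i ∈ Sᶜ, (θstar i) ^ 2 := by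
        apply Finset.sum_congr rfl
        intro i hi
        rw [Finset.mem_compl] at hi
        show (θ' i - θstar i) ^ 2 = _
        rw [hθ'app i, if_neg hi]
        ring
      rw [e3, hYdef]
      apply (Finset.sum_subset _ _).symm
      · intro i hi
        rw [Finset.mem_compl]
        exact (Finset.mem_sdiff.mp hi).2
      · intro i hi hni
        rw [Finset.mem_compl] at hi
        have : i ∉ supp θstar := by
          intro hm
          exact hni (Finset.mem_sdiff.mpr ⟨hm, hi⟩)
        rw [notmem_supp' this]
        ring
    rw [e1, e2]
  have hXZ : X + Z ≤ r2 := by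
    have hdisj : Disjoint S Dm := (Finset.sdiff_disjoint).symm
    rw [hXdef, hZdef, ← Finset.sum_union hdisj, hr2def]
    apply Finset.sum_le_sum_of_subset_of_nonneg
    · intro i hi
      rcases Finset.mem_union.mp hi with h | h
      · exact hSU h
      · exact hθstarU (Finset.mem_sdiff.mp h).1
    · intro i _ _
      exact sq_nonneg _
  -- per-coordinate bound on dropped coordinates
  have hperj : ∀ j ∈ Dm, ((k : ℝ) - kstar) * (b j) ^ 2 ≤ r2 := by
    intro j hj
    set T' : Finset (Fin N) := S \ supp θstar with hT'def
    have hT'card : (k : ℝ) - kstar ≤ T'.card := by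
      have h := Finset.card_le_card_sdiff_add_card (s := S) (t := supp θstar)
      have : (S.card : ℝ) ≤ (T'.card : ℝ) + ((supp θstar).card : ℝ) := by exact_mod_cast h
      have hcast : ((supp θstar).card : ℝ) ≤ kstar := by exact_mod_cast hstar
      rw [hScard] at this
      linarith
    have hjS : j ∉ S := (Finset.mem_sdiff.mp hj).2
    have hsum1 : (T'.card : ℝ) * (b j) ^ 2 ≤ ∑ i ∈ T', (b i - θstar i) ^ 2 := by
      rw [show (T'.card : ℝ) * (b j) ^ 2 = ∑ _i ∈ T', (b j) ^ 2 by
        rw [Finset.sum_const, nsmul_eq_mul]]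
      apply Finset.sum_le_sum
      intro i hi
      obtain ⟨hiS, hins⟩ := Finset.mem_sdiff.mp hi
      have hz : θstar i = 0 := notmem_supp' hins
      have habs := htop i hiS j hjS
      rw [hz, sub_zero]
      calc (b j) ^ 2 = |b j| ^ 2 := (sq_abs _).symm
        _ ≤ |b i| ^ 2 := by exact pow_le_pow_left₀ (abs_nonneg _) habs 2
        _ = (b i) ^ 2 := sq_abs _
    have hsum2 : ∑ i ∈ T', (b i - θstar i) ^ 2 ≤ r2 := by
      rw [hr2def]
      apply Finset.sum_le_sum_of_subset_of_nonneg
      · exact fun i hi => hSU (Finset.mem_sdiff.mp hi).1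
      · intro i _ _
        exact sq_nonneg _
    linarith [mul_le_mul_of_nonneg_right hT'card (sq_nonneg (b j))]
  have hWk : ((k : ℝ) - kstar) * W ≤ kstar * r2 := by
    have hDmcard : ((Dm.card : ℝ)) ≤ kstar := by
      have h1 : Dm.card ≤ (supp θstar).card := Finset.card_le_card (Finset.sdiff_subset)
      exact_mod_cast le_trans h1 hstar
    calc ((k : ℝ) - kstar) * W = ∑ j ∈ Dm, ((k : ℝ) - kstar) * (b j) ^ 2 := by
          rw [hWdef, Finset.mul_sum]
      _ ≤ ∑ _j ∈ Dm, r2 := Finset.sum_le_sum hperj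
      _ = Dm.card * r2 := by rw [Finset.sum_const, nsmul_eq_mul]
      _ ≤ kstar * r2 := mul_le_mul_of_nonneg_right hDmcard hr20
  -- W is small
  have hW2 : 80 * β ^ 2 * W ≤ α ^ 2 * r2 := by
    rcases Nat.eq_zero_or_pos kstar with h0 | hpos
    · have hsupp0 : supp θstar = ∅ := by
        rw [← Finset.card_eq_zero]
        omega
      have hDm0 : Dm = ∅ := by rw [hDmdef, hsupp0]; simp
      have hWz : W = 0 := by rw [hWdef, hDm0]; simp
      rw [hWz]
      calc 80 * β ^ 2 * (0:ℝ) = 0 := by ring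
        _ ≤ α ^ 2 * r2 := mul_nonneg (by positivity) hr20
    · have hk1 : (1 : ℝ) ≤ kstar := by exact_mod_cast hpos
      have hka : 81 * β ^ 2 * (kstar : ℝ) ≤ α ^ 2 * k := by
        have h' := mul_le_mul_of_nonneg_left hk (by positivity : (0:ℝ) ≤ α ^ 2)
        calc 81 * β ^ 2 * (kstar : ℝ) = α ^ 2 * (81 * (β / α) ^ 2 * kstar) := by
              field_simp
          _ ≤ α ^ 2 * k := h'
      have hab2 : α ^ 2 * (kstar : ℝ) ≤ β ^ 2 * kstar :=
        mul_le_mul_of_nonneg_right (by nlinarith) (by positivity)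
      have h80 : 80 * α ^ 2 ≤ α ^ 2 * ((k : ℝ) - kstar) := by
        have hm := mul_nonneg (sq_nonneg α) (by linarith : (0:ℝ) ≤ (kstar : ℝ) - 1)
        nlinarith [hka, hab2]
      have hkmk : (0 : ℝ) < (k : ℝ) - kstar := by
        by_contra hc
        push_neg at hc
        have hc2 := mul_le_mul_of_nonneg_left hc (le_of_lt (mul_pos hα hα))
        nlinarith [mul_pos hα hα]
      have key : 80 * β ^ 2 * (kstar : ℝ) ≤ α ^ 2 * ((k : ℝ) - kstar) := by
        linarith [hka, hab2]
      have hh : ((k : ℝ) - kstar) * (80 * β ^ 2 * W) ≤ ((k : ℝ) - kstar) * (α ^ 2 * r2) := by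
        linarith [mul_le_mul_of_nonneg_left hWk (by positivity : (0:ℝ) ≤ 80 * β ^ 2),
          mul_le_mul_of_nonneg_right key hr20]
      exact le_of_mul_le_mul_left hh hkmk
  -- Young-type bound on Y
  have hE : 8 * α * β * Y ≤ (8 * α * β + α ^ 2) * Z + (64 * β ^ 2 + 8 * α * β) * W := by
    have hsum : ∀ j ∈ Dm, 8 * α * β * (θstar j) ^ 2 ≤
        (8 * α * β + α ^ 2) * (b j - θstar j) ^ 2 + (64 * β ^ 2 + 8 * α * β) * (b j) ^ 2 := by
      intro j _
      linarith [sq_nonneg (α * (θstar j - b j) - 8 * β * (b j))]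
    calc 8 * α * β * Y = ∑ j ∈ Dm, 8 * α * β * (θstar j) ^ 2 := by
          rw [hYdef, Finset.mul_sum]
      _ ≤ ∑ j ∈ Dm, ((8 * α * β + α ^ 2) * (b j - θstar j) ^ 2
          + (64 * β ^ 2 + 8 * α * β) * (b j) ^ 2) := Finset.sum_le_sum hsum
      _ = (8 * α * β + α ^ 2) * Z + (64 * β ^ 2 + 8 * α * β) * W := by
          rw [Finset.sum_add_distrib, hZdef, hWdef, Finset.mul_sum, Finset.mul_sum]
  -- final assembly
  have hfin : 36 * β * (X + Y) ≤ (36 * β - α) * D2 := by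
    have step_a : 8 * α * β * (X + Y) ≤ (8 * α * β + α ^ 2) * r2
        + (64 * β ^ 2 + 8 * α * β) * W := by
      linarith [hE, mul_le_mul_of_nonneg_left hXZ (by positivity : (0:ℝ) ≤ 8 * α * β + α ^ 2),
        mul_nonneg (by positivity : (0:ℝ) ≤ α ^ 2) hX0]
    have step_c : 640 * α * β ^ 3 * (X + Y)
        ≤ (640 * α * β ^ 3 + 144 * α ^ 2 * β ^ 2 + 8 * α ^ 3 * β) * r2 := by
      linarith [mul_le_mul_of_nonneg_left step_a (by positivity : (0:ℝ) ≤ 80 * β ^ 2),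
        mul_le_mul_of_nonneg_left hW2 (by positivity : (0:ℝ) ≤ 64 * β ^ 2 + 8 * α * β)]
    have step_d : 1280 * α * β ^ 4 * (X + Y)
        ≤ (640 * α * β ^ 3 + 144 * α ^ 2 * β ^ 2 + 8 * α ^ 3 * β) * ((2 * β - α) * D2) := by
      linarith [mul_le_mul_of_nonneg_left step_c (by positivity : (0:ℝ) ≤ 2 * β),
        mul_le_mul_of_nonneg_left h1
          (by positivity : (0:ℝ) ≤ 640 * α * β ^ 3 + 144 * α ^ 2 * β ^ 2 + 8 * α ^ 3 * β)]
    have step_e : 36 * β * ((640 * α * β ^ 3 + 144 * α ^ 2 * β ^ 2 + 8 * α ^ 3 * β)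
        * ((2 * β - α) * D2)) ≤ 1280 * α * β ^ 4 * ((36 * β - α) * D2) := by
      linarith [mul_nonneg
        (by positivity : (0:ℝ) ≤ 11392 * α ^ 2 * β ^ 4 + 4608 * α ^ 3 * β ^ 3
          + 288 * α ^ 4 * β ^ 2) hD20]
    have step_f : (1280 * α * β ^ 4) * (36 * β * (X + Y))
        ≤ (1280 * α * β ^ 4) * ((36 * β - α) * D2) := by
      linarith [mul_le_mul_of_nonneg_left step_d (by positivity : (0:ℝ) ≤ 36 * β), step_e]
    exact le_of_mul_le_mul_left step_f (by positivity)
  rw [hXY]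
  have heq : (1 - 1 / 36 * (α / β)) * D2 = ((36 * β - α) * D2) / (36 * β) := by
    field_simp
  rw [heq, le_div_iff₀ (by positivity : (0:ℝ) < 36 * β)]
  linarith [hfin]
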